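/- Let 𝔫 be an ideal of 𝒪 and η ∈ 𝒪 nonzero and coprime to 𝔫. Let Σ_M u_M M ∈ R[M₂(𝒪)_η] be such that for every coset C ∈ M₂(𝒪)_η/SL₂(𝒪), Σ_{M∈C} u_M([M∞] − [M0]) = [∞] − [0] in R[P¹(K)]. Then for any P[u,v] ∈ R_{k−2}[X,Y][E_𝔫], T_{Δ_η}([P,(u,v)]) = Σ_M u_M [P(aX+bY, cX+dY), (au+cv, bu+dv)], where M = (a b; c d) runs over those matrices with (au+cv, bu+dv) ∈ E_𝔫. -/

import Mathlib

open scoped MatrixGroups LinearAlgebra.Projectivization Classical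
open Matrix MvPolynomial NumberField

set_option maxHeartbeats 1000000
set_option synthInstance.maxHeartbeats 200000

noncomputable section

namespace Bianchi

/-- `K` is (isomorphic to) the imaginary quadratic field `ℚ(√-d)` for some
`d ∈ {1,2,3,7,11}`, i.e. a Euclidean imaginary quadratic field. -/
def IsEuclideanImagQuad (K : Type) [Field K] [NumberField K] : Prop :=
  ∃ d : ℕ, d ∈ ({1, 2, 3, 7, 11} : Set ℕ) ∧
    ∃ α : K, α ^ 2 = -(d : K) ∧ Algebra.adjoin ℚ {α} = ⊤

variable (K : Type) [Field K] [NumberField K]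

/-- 2×2 matrices with entries in `A`. -/
abbrev Mat2 (A : Type*) := Matrix (Fin 2) (Fin 2) A

/-- The map on matrices induced by the inclusion `𝓞 K → K`. -/
def ιm : Mat2 (𝓞 K) → Mat2 K := fun M => M.map (algebraMap (𝓞 K) K)

/-- The projective line `P¹(K)`, whose points are the cusps. -/
abbrev P1 := ℙ K (Fin 2 → K)

/-- Action of a nonsingular `K`-matrix on `P¹(K)` (acting on column vectors);
junk value (the identity) for singular matrices. -/
def mAct (A : Mat2 K) : P1 K → P1 K :=
  if h : Function.Injective (Matrix.toLin' A) then
    Projectivization.map (Matrix.toLin' A) h else id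

/-- The cusp `0 = 0/1 = [0 : 1]`. -/
def c0 : P1 K := Projectivization.mk K ![0, 1]
  (by intro h; have := congrFun h 1; simp at this)

/-- The cusp `∞ = 1/0 = [1 : 0]`. -/
def cInf : P1 K := Projectivization.mk K ![1, 0]
  (by intro h; have := congrFun h 0; simp at this)

variable (R : Type) [CommRing R] [Algebra (𝓞 K) R] (k : ℕ)

/-- `R_{k-2}[X,Y]`, the space of homogeneous polynomials of degree `k - 2` in two
variables `X, Y` over `R`, presented by the coefficient vectors with respect to the
monomial basis `X^i Y^(k-2-i)`, `0 ≤ i ≤ k-2`. -/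
abbrev Poly := Fin (k - 1) → R

/-- The exponent function of the `i`-th basis monomial `X^i Y^(k-2-i)` of `R_{k-2}[X,Y]`. -/
def expo (i : Fin (k - 1)) : Fin 2 →₀ ℕ :=
  Finsupp.single 0 (i : ℕ) + Finsupp.single 1 (k - 2 - (i : ℕ))

/-- Interpret a coefficient vector as the homogeneous polynomial
`∑ i, P i • X^i Y^(k-2-i)`. -/
def toPoly : Poly R k →ₗ[R] MvPolynomial (Fin 2) R :=
  ∑ i : Fin (k - 1), (monomial (expo k i)).comp (LinearMap.proj i)

/-- Extract the coefficient vector of a homogeneous polynomial of degree `k-2`. -/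
def ofPoly : MvPolynomial (Fin 2) R →ₗ[R] Poly R k :=
  LinearMap.pi (fun i => lcoeff R (expo k i))

/-- The pair of degree-one forms `(dX - bY, -cX + aY)` attached to `g = (a b; c d)`. -/
def substVec (g : Mat2 (𝓞 K)) : Fin 2 → MvPolynomial (Fin 2) R :=
  ![C (algebraMap (𝓞 K) R (g 1 1)) * X 0 - C (algebraMap (𝓞 K) R (g 0 1)) * X 1,
    -(C (algebraMap (𝓞 K) R (g 1 0)) * X 0) + C (algebraMap (𝓞 K) R (g 0 0)) * X 1]

/-- The substitution `P(X,Y) ↦ P(dX - bY, -cX + aY)` for `g = (a b; c d)`. -/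
def substMat (g : Mat2 (𝓞 K)) : MvPolynomial (Fin 2) R →ₐ[R] MvPolynomial (Fin 2) R :=
  aeval (substVec K R g)

/-- The right action `P ↦ P|_g = P(dX - bY, -cX + aY)` of a matrix `g` over `𝓞 K`
on `R_{k-2}[X,Y]` (substitution preserves homogeneity, so this is computed by
passing to polynomials, substituting, and taking coefficients again). -/
def polyAct (g : Mat2 (𝓞 K)) : Poly R k →ₗ[R] Poly R k :=
  (ofPoly R k) ∘ₗ (substMat K R g).toLinearMap ∘ₗ (toPoly R k)

/-- Evaluation `P(x₀, x₁)` of `P ∈ R_{k-2}[X,Y]` at a pair of elements of `R`. -/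
def pevalR (P : Poly R k) (x : Fin 2 → R) : R := MvPolynomial.eval x (toPoly R k P)

end Bianchi
namespace Bianchi

variable (K : Type) [Field K] [NumberField K]
variable (R : Type) [CommRing R] [Algebra (𝓞 K) R] (k : ℕ)
variable (Γ : Subgroup (SL(2, 𝓞 K)))

/-- The relations defining boundary modular symbols: `x|_γ = x` for `γ ∈ Γ`. -/
def bsRel : Submodule R (P1 K →₀ Poly R k) :=
  Submodule.span R {x | ∃ (γ : SL(2, 𝓞 K)) (_ : γ ∈ Γ) (α : P1 K) (P : Poly R k),
    x = Finsupp.single (mAct K (ιm K γ.1) α) (polyAct K R k γ.1 P) - Finsupp.single α P}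

/-- The boundary modular symbols `B_k(Γ)` of weight `k` and level `Γ`. -/
abbrev BS := (P1 K →₀ Poly R k) ⧸ bsRel K R k Γ

/-- The boundary modular symbol `P ⊗ {α}`. -/
def bsym (α : P1 K) (P : Poly R k) : BS K R k Γ :=
  Submodule.Quotient.mk (Finsupp.single α P)

/-- The free module underlying modular symbols. -/
abbrev MSfree := (P1 K × P1 K) →₀ Poly R k

/-- The relations defining modular symbols: `{α,α} = 0`,
`{α,β} + {β,γ} + {γ,α} = 0`, and `x|_γ = x` for `γ ∈ Γ`. -/
def msRel : Submodule R (MSfree K R k) :=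
  Submodule.span R
    ({x | ∃ (α : P1 K) (P : Poly R k), x = Finsupp.single (α, α) P} ∪
     {x | ∃ (α β γ : P1 K) (P : Poly R k),
        x = Finsupp.single (α, β) P + Finsupp.single (β, γ) P + Finsupp.single (γ, α) P} ∪
     {x | ∃ (γ : SL(2, 𝓞 K)) (_ : γ ∈ Γ) (α β : P1 K) (P : Poly R k),
        x = Finsupp.single (mAct K (ιm K γ.1) α, mAct K (ιm K γ.1) β) (polyAct K R k γ.1 P)
          - Finsupp.single (α, β) P})

/-- The modular symbols `M_k(Γ)` of weight `k` and level `Γ`. -/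
abbrev MS := MSfree K R k ⧸ msRel K R k Γ

/-- The modular symbol `P ⊗ {α, β}`. -/
def msym (α β : P1 K) (P : Poly R k) : MS K R k Γ :=
  Submodule.Quotient.mk (Finsupp.single (α, β) P)

/-- The boundary map on the free modules, `P ⊗ {α,β} ↦ P ⊗ {β} - P ⊗ {α}`. -/
def bdFree : MSfree K R k →ₗ[R] (P1 K →₀ Poly R k) :=
  Finsupp.lsum ℕ (fun p : P1 K × P1 K =>
    (Finsupp.lsingle p.2 - Finsupp.lsingle p.1 : Poly R k →ₗ[R] (P1 K →₀ Poly R k)))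

lemma bdFree_rel : msRel K R k Γ ≤ (bsRel K R k Γ).comap (bdFree K R k) := by
  rw [msRel, Submodule.span_le]
  rintro x ((⟨α, P, rfl⟩ | ⟨α, β, γ, P, rfl⟩) | ⟨γ, hγ, α, β, P, rfl⟩) <;>
    simp only [SetLike.mem_coe, Submodule.mem_comap, map_add, map_sub, bdFree,
      Finsupp.lsum_single, LinearMap.sub_apply, Finsupp.lsingle_apply]
  · simpa using (bsRel K R k Γ).zero_mem
  · have h0 : (Finsupp.single β P - Finsupp.single α P)
        + (Finsupp.single γ P - Finsupp.single β P)
        + (Finsupp.single α P - Finsupp.single γ P) = (0 : P1 K →₀ Poly R k) := by abel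
    rw [h0]
    exact (bsRel K R k Γ).zero_mem
  · have h1 : (Finsupp.single (mAct K (ιm K γ.1) β) (polyAct K R k γ.1 P)
        - Finsupp.single β P) ∈ bsRel K R k Γ :=
      Submodule.subset_span ⟨γ, hγ, β, P, rfl⟩
    have h2 : (Finsupp.single (mAct K (ιm K γ.1) α) (polyAct K R k γ.1 P)
        - Finsupp.single α P) ∈ bsRel K R k Γ :=
      Submodule.subset_span ⟨γ, hγ, α, P, rfl⟩
    have h3 := Submodule.sub_mem _ h1 h2
    convert h3 using 1
    abel

/-- The boundary map `∂ : M_k(Γ) → B_k(Γ)`. -/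
def bd : MS K R k Γ →ₗ[R] BS K R k Γ :=
  Submodule.mapQ _ _ (bdFree K R k) (bdFree_rel K R k Γ)

/-- The cuspidal modular symbols `𝒮_k(Γ) = ker ∂`. -/
def Scusp : Submodule R (MS K R k Γ) := LinearMap.ker (bd K R k Γ)

/-- The Manin symbol `[P, g] = P|_g ⊗ {g·0, g·∞}`, for an arbitrary matrix `g` over `𝓞`. -/
def maninSymM (P : Poly R k) (A : Mat2 (𝓞 K)) : MS K R k Γ :=
  msym K R k Γ (mAct K (ιm K A) (c0 K)) (mAct K (ιm K A) (cInf K)) (polyAct K R k A P)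

end Bianchi
namespace Bianchi

variable (K : Type) [Field K] [NumberField K]
variable (Γ : Subgroup (SL(2, 𝓞 K)))

/-- `F` is a (finite) system of representatives for the coset space `Γ\Δ`. -/
def IsRepSys (Δ : Set (Mat2 (𝓞 K))) (F : Finset (Mat2 (𝓞 K))) : Prop :=
  ↑F ⊆ Δ ∧ ∀ δ ∈ Δ, ∃! δ' : Mat2 (𝓞 K), δ' ∈ F ∧
    ∃ γ : SL(2, 𝓞 K), γ ∈ Γ ∧ δ = γ.1 * δ'

end Bianchi
namespace Bianchi

variable (K : Type) [Field K] [NumberField K]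

/-- The congruence subgroup `Γ₁(𝔫) = {(a b; c d) ∈ SL₂(𝓞) : c ≡ d - 1 ≡ 0 mod 𝔫}`. -/
def Gamma1 (n : Ideal (𝓞 K)) : Subgroup (SL(2, 𝓞 K)) where
  carrier := {g | g.1 1 0 ∈ n ∧ g.1 1 1 - 1 ∈ n}
  one_mem' := by
    constructor <;> simp
  mul_mem' := by
    rintro a b ⟨hc, hd⟩ ⟨hc', hd'⟩
    have hab : (a * b).1 = a.1 * b.1 := rfl
    have h10 : (a * b).1 1 0 = a.1 1 0 * b.1 0 0 + a.1 1 1 * b.1 1 0 := by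
      rw [hab, Matrix.mul_apply, Fin.sum_univ_two]
    have h11 : (a * b).1 1 1 = a.1 1 0 * b.1 0 1 + a.1 1 1 * b.1 1 1 := by
      rw [hab, Matrix.mul_apply, Fin.sum_univ_two]
    constructor
    · rw [h10]
      exact Ideal.add_mem n (Ideal.mul_mem_right _ n hc) (Ideal.mul_mem_left _ _ hc')
    · rw [h11]
      have : a.1 1 0 * b.1 0 1 + a.1 1 1 * b.1 1 1 - 1
          = a.1 1 0 * b.1 0 1 + ((a.1 1 1 - 1) * b.1 1 1 + (b.1 1 1 - 1)) := by ring
      rw [this]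
      exact Ideal.add_mem n (Ideal.mul_mem_right _ n hc)
        (Ideal.add_mem n (Ideal.mul_mem_right _ n hd) hd')
  inv_mem' := by
    rintro a ⟨hc, hd⟩
    have hinv : (a⁻¹).1 = (a.1).adjugate := Matrix.SpecialLinearGroup.coe_inv a
    have hadj : (a.1).adjugate = !![a.1 1 1, -a.1 0 1; -a.1 1 0, a.1 0 0] :=
      Matrix.adjugate_fin_two a.1
    have hdet : a.1 0 0 * a.1 1 1 - a.1 0 1 * a.1 1 0 = 1 := by
      have := a.2
      rwa [Matrix.det_fin_two] at this
    constructor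
    · show (a⁻¹).1 1 0 ∈ n
      rw [hinv, hadj]
      simpa using neg_mem hc
    · show (a⁻¹).1 1 1 - 1 ∈ n
      rw [hinv, hadj]
      have h00 : (!![a.1 1 1, -a.1 0 1; -a.1 1 0, a.1 0 0] : Mat2 (𝓞 K)) 1 1 = a.1 0 0 := by
        simp
      rw [h00]
      have hdd : a.1 0 0 * a.1 1 1 - 1 = a.1 0 1 * a.1 1 0 := by
        linear_combination hdet
      have h3 : a.1 0 0 - 1 = -(a.1 0 0 * (a.1 1 1 - 1)) + (a.1 0 0 * a.1 1 1 - 1) := by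
        ring
      rw [h3, hdd]
      exact add_mem (neg_mem (Ideal.mul_mem_left _ _ hd)) (Ideal.mul_mem_left _ _ hc)

/-- The set `Δ_η = {(a b; c d) ∈ Mat₂(𝓞) : ad - bc = η, c ≡ a - 1 ≡ 0 mod 𝔫}`. -/
def DeltaEta (n : Ideal (𝓞 K)) (η : 𝓞 K) : Set (Mat2 (𝓞 K)) :=
  {m | m.det = η ∧ m 1 0 ∈ n ∧ m 0 0 - 1 ∈ n}

/-- The bottom row `(c, d)` of a matrix, reduced mod `𝔫`; for `g ∈ SL₂(𝓞)` this is
`π(g) = (0,1)g ∈ E_𝔫`. -/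
def botPair (n : Ideal (𝓞 K)) (m : Mat2 (𝓞 K)) : (𝓞 K ⧸ n) × (𝓞 K ⧸ n) :=
  (Ideal.Quotient.mk n (m 1 0), Ideal.Quotient.mk n (m 1 1))

end Bianchi

/-!
For `δ` running over representatives of `Γ₁(𝔫)\Δ_η` put `A = δg`. Pushing condition (C) for the
coset `A^adj · SL₂(𝒪)` forward along `x ↦ P|_A ⊗ {0, A x}` turns the summand `P|_A ⊗ {A0, A∞}`
of `T_{Δ_η}[P, g]` into `∑ u_M (P|_A ⊗ {AM0, AM∞})`. For `M = A^adj s` one has `AM = η s`, so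
each term is the Manin symbol `[P|_{M^adj}, s]`, and `s` has the same bottom row mod `𝔫` as `gM`
because `δ ≡ (1 *; 0 *)` mod `𝔫`. Finally these cosets are pairwise disjoint for distinct
representatives and together cover exactly the `M` of determinant `η` with `(0,1)gM ∈ E_𝔫`.
-/

namespace Bianchi

section SpecialLinear

variable {m A : Type*} [Fintype m] [DecidableEq m] [CommRing A]

lemma adjugate_mul_cancel_left (s : SpecialLinearGroup m A) (B : Matrix m m A) :
    s.1.adjugate * (s.1 * B) = B := by
  rw [← Matrix.mul_assoc, adjugate_mul, s.2, one_smul, Matrix.one_mul]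

lemma mul_adjugate_cancel_left (s : SpecialLinearGroup m A) (B : Matrix m m A) :
    s.1 * (s.1.adjugate * B) = B := by
  rw [← Matrix.mul_assoc, mul_adjugate, s.2, one_smul, Matrix.one_mul]

lemma coe_mul_inv (s t : SpecialLinearGroup m A) : (s * t⁻¹).1 = s.1 * t.1.adjugate :=
  congrArg (s.1 * ·) (Matrix.SpecialLinearGroup.coe_inv t)

lemma coe_inv_mul (s t : SpecialLinearGroup m A) : (s⁻¹ * t).1 = s.1.adjugate * t.1 :=
  congrArg (· * t.1) (Matrix.SpecialLinearGroup.coe_inv s)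

end SpecialLinear

section PolyAction

variable (R : Type) [CommRing R] (k : ℕ)

lemma expo_injective : Function.Injective (expo k) := fun i j h => by
  have h0 := DFunLike.congr_fun h 0
  simp [expo] at h0
  exact Fin.ext h0

lemma degree_expo (i : Fin (k - 1)) : (expo k i).degree = k - 2 := by
  have := i.2
  simp [Finsupp.degree_eq_sum, expo]
  omega

lemma exists_expo_eq (hk : 2 ≤ k) {d : Fin 2 →₀ ℕ} (hd : d.degree = k - 2) :
    ∃ i, expo k i = d := by
  rw [Finsupp.degree_eq_sum, Fin.sum_univ_two] at hd
  refine ⟨⟨d 0, by omega⟩, Finsupp.ext fun j => ?_⟩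
  fin_cases j <;> simp [expo]; omega

lemma toPoly_apply (P : Poly R k) :
    toPoly R k P = ∑ i : Fin (k - 1), monomial (expo k i) (P i) := by
  simp [toPoly]

lemma toPoly_isHomogeneous (P : Poly R k) : (toPoly R k P).IsHomogeneous (k - 2) :=
  toPoly_apply R k P ▸ IsHomogeneous.sum _ _ _ fun i _ => isHomogeneous_monomial _ (degree_expo k i)

lemma toPoly_ofPoly (hk : 2 ≤ k) {Q : MvPolynomial (Fin 2) R} (hQ : Q.IsHomogeneous (k - 2)) :
    toPoly R k (ofPoly R k Q) = Q := by
  ext d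
  rw [toPoly_apply, coeff_sum]
  simp only [coeff_monomial]
  by_cases hd : d.degree = k - 2
  · obtain ⟨i, rfl⟩ := exists_expo_eq k hk hd
    simp [(expo_injective k).eq_iff, ofPoly]
  · rw [hQ.coeff_eq_zero hd]
    exact Finset.sum_eq_zero fun i _ => if_neg fun h : expo k i = d => hd (h ▸ degree_expo k i)

variable (K : Type) [Field K] [Algebra (𝓞 K) R]

lemma substMat_isHomogeneous (g : Mat2 (𝓞 K)) {Q : MvPolynomial (Fin 2) R} {m : ℕ}
    (hQ : Q.IsHomogeneous m) : (substMat K R g Q).IsHomogeneous m := by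
  have hvec : ∀ i, (substVec K R g i).IsHomogeneous 1 := fun i => by
    fin_cases i
    · exact (isHomogeneous_C_mul_X _ 0).sub (isHomogeneous_C_mul_X _ 1)
    · exact (isHomogeneous_C_mul_X _ 0).neg.add (isHomogeneous_C_mul_X _ 1)
  simpa [substMat] using hQ.aeval _ hvec

lemma substMat_substMat (A B : Mat2 (𝓞 K)) (Q : MvPolynomial (Fin 2) R) :
    substMat K R A (substMat K R B Q) = substMat K R (A * B) Q := by
  rw [substMat, substMat, ← AlgHom.comp_apply, comp_aeval]
  congr 2
  funext i
  fin_cases i <;> simp [substVec, Matrix.mul_apply, Fin.sum_univ_two] <;> ring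

lemma polyAct_polyAct (A B : Mat2 (𝓞 K)) (P : Poly R k) :
    polyAct K R k A (polyAct K R k B P) = polyAct K R k (A * B) P := by
  rcases lt_or_ge k 2 with hk | hk
  · have : IsEmpty (Fin (k - 1)) := ⟨fun i => by have := i.2; omega⟩
    exact Subsingleton.elim _ _
  simp only [polyAct, LinearMap.comp_apply, AlgHom.toLinearMap_apply,
    toPoly_ofPoly R k hk (substMat_isHomogeneous R K B (toPoly_isHomogeneous R k P)),
    substMat_substMat]

end PolyAction

section ProjectiveAction

variable (K : Type) [Field K]

lemma injective_toLin' {A : Mat2 K} (hA : A.det ≠ 0) : Function.Injective (Matrix.toLin' A) :=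
  mulVec_injective_iff_isUnit.mpr ((isUnit_iff_isUnit_det A).mpr (isUnit_iff_ne_zero.mpr hA))

lemma mAct_mul {A B : Mat2 K} (hA : A.det ≠ 0) (hB : B.det ≠ 0) (x : P1 K) :
    mAct K A (mAct K B x) = mAct K (A * B) x := by
  have hAB : (A * B).det ≠ 0 := by rw [det_mul]; exact mul_ne_zero hA hB
  induction x using Projectivization.ind with
  | h v hv =>
    simp only [mAct, dif_pos (injective_toLin' K hA), dif_pos (injective_toLin' K hB),
      dif_pos (injective_toLin' K hAB), Projectivization.map_mk]
    congr 1
    simp [Matrix.toLin'_mul]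

lemma mAct_smul {c : K} (hc : c ≠ 0) {A : Mat2 K} (hA : A.det ≠ 0) (x : P1 K) :
    mAct K (c • A) x = mAct K A x := by
  have hcA : (c • A).det ≠ 0 := by rw [det_smul]; exact mul_ne_zero (pow_ne_zero _ hc) hA
  induction x using Projectivization.ind with
  | h v hv =>
    simp only [mAct, dif_pos (injective_toLin' K hA), dif_pos (injective_toLin' K hcA),
      Projectivization.map_mk, Projectivization.mk_eq_mk_iff]
    exact ⟨Units.mk0 c hc, by simp [Units.smul_def, mul_add]⟩

lemma det_ιm_ne_zero {A : Mat2 (𝓞 K)} (hA : A.det ≠ 0) : (ιm K A).det ≠ 0 := by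
  rw [ιm, ← RingHom.mapMatrix_apply, ← RingHom.map_det]
  exact (map_ne_zero_iff _ (FaithfulSMul.algebraMap_injective (𝓞 K) K)).mpr hA

lemma mAct_ιm_mul {A B : Mat2 (𝓞 K)} (hA : A.det ≠ 0) (hB : B.det ≠ 0) (x : P1 K) :
    mAct K (ιm K A) (mAct K (ιm K B) x) = mAct K (ιm K (A * B)) x := by
  rw [mAct_mul K (det_ιm_ne_zero K hA) (det_ιm_ne_zero K hB), ιm, ιm, ιm, Matrix.map_mul]

lemma mAct_ιm_smul {c : 𝓞 K} (hc : c ≠ 0) {A : Mat2 (𝓞 K)} (hA : A.det ≠ 0) (x : P1 K) :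
    mAct K (ιm K (c • A)) x = mAct K (ιm K A) x := by
  have : ιm K (c • A) = algebraMap (𝓞 K) K c • ιm K A := by
    ext i j; simp [ιm]
  rw [this, mAct_smul K ((map_ne_zero_iff _ (FaithfulSMul.algebraMap_injective (𝓞 K) K)).mpr hc)
    (det_ιm_ne_zero K hA)]

end ProjectiveAction

section ModularSymbols

variable (K : Type) [Field K] (R : Type) [CommRing R] [Algebra (𝓞 K) R] (k : ℕ)
variable (Γ : Subgroup SL(2, 𝓞 K))

lemma msym_self (α : P1 K) (P : Poly R k) : msym K R k Γ α α P = 0 :=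
  (Submodule.Quotient.mk_eq_zero _).mpr (Submodule.subset_span (Or.inl (Or.inl ⟨α, P, rfl⟩)))

lemma msym_add_msym_add_msym (α β γ : P1 K) (P : Poly R k) :
    msym K R k Γ α β P + msym K R k Γ β γ P + msym K R k Γ γ α P = 0 :=
  (Submodule.Quotient.mk_eq_zero _).mpr
    (Submodule.subset_span (Or.inl (Or.inr ⟨α, β, γ, P, rfl⟩)))

lemma msym_eq_sub (β α₁ α₂ : P1 K) (P : Poly R k) :
    msym K R k Γ α₁ α₂ P = msym K R k Γ β α₂ P - msym K R k Γ β α₁ P := by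
  have h₁ := msym_add_msym_add_msym K R k Γ β α₁ α₂ P
  have h₂ := msym_add_msym_add_msym K R k Γ β α₂ β P
  rw [msym_self, add_zero] at h₂
  linear_combination (norm := abel) h₁ - h₂

lemma msym_mAct_polyAct {γ : SL(2, 𝓞 K)} (hγ : γ ∈ Γ) (α β : P1 K) (P : Poly R k) :
    msym K R k Γ (mAct K (ιm K γ) α) (mAct K (ιm K γ) β) (polyAct K R k γ P)
      = msym K R k Γ α β P :=
  (Submodule.Quotient.eq _).mpr (Submodule.subset_span (Or.inr ⟨γ, hγ, α, β, P, rfl⟩))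

variable [NumberField K]

lemma maninSymM_eq_of_mul_inv_mem {s t : SL(2, 𝓞 K)} (hst : s * t⁻¹ ∈ Γ) (P : Poly R k) :
    maninSymM K R k Γ P s = maninSymM K R k Γ P t := by
  have hs : s.1 = (s * t⁻¹).1 * t.1 := congrArg Subtype.val (inv_mul_cancel_right s t).symm
  have hdet : ∀ u : SL(2, 𝓞 K), u.1.det ≠ 0 := by simp
  rw [maninSymM, maninSymM, hs, ← mAct_ιm_mul K (hdet _) (hdet _),
    ← mAct_ιm_mul K (hdet _) (hdet _), ← polyAct_polyAct, msym_mAct_polyAct K R k Γ hst]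

lemma maninSymM_adjugate_mul {η : 𝓞 K} (hη : η ≠ 0) {A : Mat2 (𝓞 K)} (hA : A.det = η)
    (s : SL(2, 𝓞 K)) (P : Poly R k) :
    maninSymM K R k Γ (polyAct K R k (A.adjugate * s).adjugate P) s
      = msym K R k Γ (mAct K (ιm K A) (mAct K (ιm K (A.adjugate * s)) (c0 K)))
          (mAct K (ιm K A) (mAct K (ιm K (A.adjugate * s)) (cInf K))) (polyAct K R k A P) := by
  have hs : s.1.det ≠ 0 := by simp
  have hM : (A.adjugate * s).det ≠ 0 := by simp [det_adjugate, hA, hη]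
  have hAM : A * (A.adjugate * s) = η • s.1 := by
    rw [← Matrix.mul_assoc, mul_adjugate, hA, smul_mul, Matrix.one_mul]
  have hsM : s.1 * (A.adjugate * s).adjugate = A := by
    rw [adjugate_mul_distrib, adjugate_adjugate' A, ← Matrix.mul_assoc, mul_adjugate]
    simp
  rw [maninSymM, polyAct_polyAct, hsM, mAct_ιm_mul K (hA ▸ hη) hM, mAct_ιm_mul K (hA ▸ hη) hM,
    hAM, mAct_ιm_smul K hη hs, mAct_ιm_smul K hη hs]

end ModularSymbols

section Level

variable (K : Type) [Field K] (n : Ideal (𝓞 K))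

lemma mk_eq_one_iff {a : 𝓞 K} : Ideal.Quotient.mk n a = 1 ↔ a - 1 ∈ n := by
  rw [← map_one (Ideal.Quotient.mk n), Ideal.Quotient.eq]

lemma mem_Gamma1_iff (γ : SL(2, 𝓞 K)) :
    γ ∈ Gamma1 K n ↔ Ideal.Quotient.mk n (γ.1 1 0) = 0 ∧ Ideal.Quotient.mk n (γ.1 1 1) = 1 := by
  rw [Ideal.Quotient.eq_zero_iff_mem, mk_eq_one_iff]
  rfl

lemma mem_DeltaEta_iff {η : 𝓞 K} {m : Mat2 (𝓞 K)} :
    m ∈ DeltaEta K n η ↔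
      m.det = η ∧ Ideal.Quotient.mk n (m 1 0) = 0 ∧ Ideal.Quotient.mk n (m 0 0) = 1 := by
  rw [Ideal.Quotient.eq_zero_iff_mem, mk_eq_one_iff]
  rfl

lemma mk_det_SL (s : SL(2, 𝓞 K)) :
    Ideal.Quotient.mk n (s.1 0 0) * Ideal.Quotient.mk n (s.1 1 1)
      - Ideal.Quotient.mk n (s.1 0 1) * Ideal.Quotient.mk n (s.1 1 0) = 1 := by
  rw [← map_mul, ← map_mul, ← map_sub, ← det_fin_two, s.2, map_one]

lemma span_botPair_eq_top (s : SL(2, 𝓞 K)) :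
    Ideal.span {(botPair K n s.1).1, (botPair K n s.1).2} = ⊤ := by
  rw [Ideal.eq_top_iff_one, Ideal.mem_span_pair]
  exact ⟨-Ideal.Quotient.mk n (s.1 0 1), Ideal.Quotient.mk n (s.1 0 0), by
    simp only [botPair]; linear_combination mk_det_SL K n s⟩

lemma botPair_adjugate_mul {η : 𝓞 K} {δ : Mat2 (𝓞 K)} (hδ : δ ∈ DeltaEta K n η)
    (A : Mat2 (𝓞 K)) : botPair K n (δ.adjugate * A) = botPair K n A := by
  obtain ⟨-, h10, h00⟩ := (mem_DeltaEta_iff K n).mp hδ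
  simp [botPair, adjugate_fin_two, Matrix.mul_apply, Fin.sum_univ_two, h10, h00]

lemma mem_Gamma1_of_botPair_eq {s t : SL(2, 𝓞 K)} (h : botPair K n s.1 = botPair K n t.1) :
    s * t⁻¹ ∈ Gamma1 K n := by
  obtain ⟨h10, h11⟩ := Prod.ext_iff.mp h
  simp only [botPair] at h10 h11
  rw [mem_Gamma1_iff, coe_mul_inv]
  simp only [adjugate_fin_two, Matrix.mul_apply, Fin.sum_univ_two]
  simp [h10, h11]
  exact ⟨by ring, by linear_combination mk_det_SL K n t⟩

lemma mul_adjugate_mem_DeltaEta {η : 𝓞 K} (h : SL(2, 𝓞 K)) {B : Mat2 (𝓞 K)} (hB : B.det = η)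
    (hb : botPair K n h.1 = botPair K n B) : h.1 * B.adjugate ∈ DeltaEta K n η := by
  obtain ⟨h10, h11⟩ := Prod.ext_iff.mp hb
  simp only [botPair] at h10 h11
  rw [mem_DeltaEta_iff]
  refine ⟨by rw [det_mul, det_adjugate]; simp [hB], ?_, ?_⟩ <;>
    simp [adjugate_fin_two, Matrix.mul_apply, Fin.sum_univ_two]
  · linear_combination Ideal.Quotient.mk n (B 1 1) * h10 - Ideal.Quotient.mk n (B 1 0) * h11
  · linear_combination mk_det_SL K n h - Ideal.Quotient.mk n (h.1 0 0) * h11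
      + Ideal.Quotient.mk n (h.1 0 1) * h10

lemma mem_Gamma1_of_mul_mem_DeltaEta {η₁ η₂ : 𝓞 K} {δ : Mat2 (𝓞 K)} {t : SL(2, 𝓞 K)}
    (hδ : δ ∈ DeltaEta K n η₁) (htδ : t.1 * δ ∈ DeltaEta K n η₂) : t ∈ Gamma1 K n := by
  -- `δ` and `tδ` are both `≡ (1 *; 0 *)`, hence so is `t`, and then `det t = 1` fixes `t₁₁ ≡ 1`.
  obtain ⟨-, h10, h00⟩ := (mem_DeltaEta_iff K n).mp hδ
  obtain ⟨-, ht10, ht00⟩ := (mem_DeltaEta_iff K n).mp htδ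
  simp [Matrix.mul_apply, Fin.sum_univ_two, h10, h00] at ht10 ht00
  refine (mem_Gamma1_iff K n t).mpr ⟨ht10, ?_⟩
  linear_combination mk_det_SL K n t - Ideal.Quotient.mk n (t.1 1 1) * ht00
    + Ideal.Quotient.mk n (t.1 0 1) * ht10

end Level

section Cosets

variable (K : Type) [Field K]

lemma IsRepSys.eq_of_eq_mul {Γ : Subgroup SL(2, 𝓞 K)} {Δ : Set (Mat2 (𝓞 K))}
    {F : Finset (Mat2 (𝓞 K))} (hF : IsRepSys K Γ Δ F) {δ₁ δ₂ : Mat2 (𝓞 K)} (h₁ : δ₁ ∈ F)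
    (h₂ : δ₂ ∈ F) {γ : SL(2, 𝓞 K)} (hγ : γ ∈ Γ) (h : δ₂ = γ.1 * δ₁) : δ₁ = δ₂ :=
  (hF.2 δ₂ (hF.1 h₂)).unique ⟨h₁, γ, hγ, h⟩ ⟨h₂, 1, Γ.one_mem, (Matrix.one_mul δ₂).symm⟩

lemma eq_mul_of_adjugate_mul_eq {η : 𝓞 K} (hη : η ≠ 0) {δ₁ δ₂ : Mat2 (𝓞 K)}
    (h₁ : δ₁.det = η) (h₂ : δ₂.det = η) (g s₁ s₂ : SL(2, 𝓞 K))
    (h : (δ₁ * g.1).adjugate * s₁.1 = (δ₂ * g.1).adjugate * s₂.1) :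
    δ₂ = (s₂ * s₁⁻¹).1 * δ₁ := by
  have h' : δ₁.adjugate * s₁.1 = δ₂.adjugate * s₂.1 := by
    simpa only [adjugate_mul_distrib, Matrix.mul_assoc, mul_adjugate_cancel_left]
      using congrArg (g.1 * ·) h
  apply smul_right_injective (Mat2 (𝓞 K)) hη
  calc η • δ₂ = δ₂ * (δ₁.adjugate * s₁.1 * (s₁.1.adjugate * δ₁)) := by
        rw [Matrix.mul_assoc, mul_adjugate_cancel_left, adjugate_mul, h₁, Matrix.mul_smul,
          Matrix.mul_one]
    _ = δ₂ * δ₂.adjugate * (s₂ * s₁⁻¹).1 * δ₁ := by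
        rw [h', coe_mul_inv]; simp only [Matrix.mul_assoc]
    _ = η • ((s₂ * s₁⁻¹).1 * δ₁) := by
        rw [mul_adjugate, h₂, Matrix.smul_mul, Matrix.smul_mul, Matrix.one_mul]

variable (n : Ideal (𝓞 K)) {η : 𝓞 K} {F : Finset (Mat2 (𝓞 K))}

lemma botPair_mul_adjugate_mul {δ : Mat2 (𝓞 K)} (hδ : δ ∈ DeltaEta K n η) (g s : SL(2, 𝓞 K)) :
    botPair K n (g.1 * ((δ * g.1).adjugate * s.1)) = botPair K n s.1 := by
  rw [adjugate_mul_distrib, Matrix.mul_assoc, mul_adjugate_cancel_left, botPair_adjugate_mul K n hδ]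

lemma IsRepSys.eq_of_adjugate_mul_eq (hF : IsRepSys K (Gamma1 K n) (DeltaEta K n η) F)
    (hη : η ≠ 0) {δ₁ δ₂ : Mat2 (𝓞 K)} (h₁ : δ₁ ∈ F) (h₂ : δ₂ ∈ F) (g s₁ s₂ : SL(2, 𝓞 K))
    (h : (δ₁ * g.1).adjugate * s₁.1 = (δ₂ * g.1).adjugate * s₂.1) : δ₁ = δ₂ := by
  have hδ := eq_mul_of_adjugate_mul_eq K hη (hF.1 h₁).1 (hF.1 h₂).1 g s₁ s₂ h
  exact hF.eq_of_eq_mul K h₁ h₂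
    (mem_Gamma1_of_mul_mem_DeltaEta K n (hF.1 h₁) (hδ ▸ hF.1 h₂)) hδ

lemma IsRepSys.exists_eq_adjugate_mul {Γ : Subgroup SL(2, 𝓞 K)}
    (hF : IsRepSys K Γ (DeltaEta K n η) F) (g h : SL(2, 𝓞 K)) {M : Mat2 (𝓞 K)}
    (hM : M.det = η) (hb : botPair K n h.1 = botPair K n (g.1 * M)) :
    ∃ δ ∈ F, ∃ s : SL(2, 𝓞 K), M = (δ * g.1).adjugate * s.1 := by
  have hgM : (g.1 * M).det = η := by rw [det_mul, g.2, one_mul, hM]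
  obtain ⟨δ, ⟨hδF, γ, -, hγδ⟩, -⟩ := hF.2 _ (mul_adjugate_mem_DeltaEta K n h hgM hb)
  refine ⟨δ, hδF, γ⁻¹ * h, ?_⟩
  have hδ : δ = (γ⁻¹ * h).1 * (g.1 * M).adjugate := by
    rw [coe_inv_mul, Matrix.mul_assoc, hγδ, adjugate_mul_cancel_left]
  rw [hδ, adjugate_mul_distrib, adjugate_mul_distrib, adjugate_adjugate']
  simp [Matrix.mul_assoc, adjugate_mul_cancel_left, adjugate_mul, det_adjugate]

end Cosets

section HeckeTerm

variable (K : Type) [Field K] [NumberField K] (n : Ideal (𝓞 K)) {η : 𝓞 K}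
variable (R : Type) [CommRing R] [Algebra (𝓞 K) R] (k : ℕ)

lemma msym_eq_sum_maninSymM (hη : η ≠ 0) (u : Mat2 (𝓞 K) →₀ R)
    (hC : ∀ A : Mat2 (𝓞 K), A.det = η →
      ∑ M ∈ u.support.filter (fun M => ∃ s : SL(2, 𝓞 K), M = A * s.1),
        u M • (Finsupp.single (mAct K (ιm K M) (cInf K)) (1 : R)
          - Finsupp.single (mAct K (ιm K M) (c0 K)) (1 : R))
      = Finsupp.single (cInf K) (1 : R) - Finsupp.single (c0 K) (1 : R))
    (L : (𝓞 K ⧸ n) × (𝓞 K ⧸ n) → SL(2, 𝓞 K))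
    (hL : ∀ p : (𝓞 K ⧸ n) × (𝓞 K ⧸ n), Ideal.span {p.1, p.2} = ⊤ → botPair K n (L p).1 = p)
    {δ : Mat2 (𝓞 K)} (hδ : δ ∈ DeltaEta K n η) (g : SL(2, 𝓞 K)) (P : Poly R k) :
    msym K R k (Gamma1 K n) (mAct K (ιm K δ) (mAct K (ιm K g.1) (c0 K)))
        (mAct K (ιm K δ) (mAct K (ιm K g.1) (cInf K))) (polyAct K R k δ (polyAct K R k g.1 P))
      = ∑ M ∈ u.support.filter (fun M => ∃ s : SL(2, 𝓞 K), M = (δ * g.1).adjugate * s.1),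
          u M • maninSymM K R k (Gamma1 K n) (polyAct K R k M.adjugate P)
            (L (botPair K n (g.1 * M))).1 := by
  set A := δ * g.1
  have hA : A.det = η := by rw [det_mul, hδ.1, g.2, mul_one]
  have hg : g.1.det ≠ 0 := by simp
  have hsum := congrArg (Finsupp.linearCombination R fun x =>
    msym K R k (Gamma1 K n) (c0 K) (mAct K (ιm K A) x) (polyAct K R k A P))
    (hC A.adjugate (by rw [det_adjugate]; simpa using hA))
  simp only [map_sum, map_sub, map_smul, Finsupp.linearCombination_single, one_smul] at hsum
  rw [mAct_ιm_mul K (hδ.1 ▸ hη) hg, mAct_ιm_mul K (hδ.1 ▸ hη) hg, polyAct_polyAct,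
    msym_eq_sub K R k _ (c0 K), ← hsum]
  refine Finset.sum_congr rfl fun M hM => ?_
  obtain ⟨-, s, rfl⟩ := Finset.mem_filter.mp hM
  have hb := botPair_mul_adjugate_mul K n hδ g s
  rw [maninSymM_eq_of_mul_inv_mem K R k _
      (mem_Gamma1_of_botPair_eq K n ((hL _ (hb ▸ span_botPair_eq_top K n s)).trans hb)),
    maninSymM_adjugate_mul K R k _ hη hA, ← msym_eq_sub]

end HeckeTerm

theorem hecke_action_manin_symbols_Gamma1_general
    (K : Type) [Field K] [NumberField K]
    (R : Type) [CommRing R] [Algebra (𝓞 K) R]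
    (k : ℕ)
    (n : Ideal (𝓞 K)) (η : 𝓞 K) (hη : η ≠ 0)
    (u : Mat2 (𝓞 K) →₀ R)
    (hsupp : ∀ M ∈ u.support, M.det = η)
    -- condition: for every coset `C ∈ M₂(𝓞)_η/SL₂(𝓞)`,
    -- `∑_{M ∈ C} u_M ([M∞] - [M0]) = [∞] - [0]` in `R[P¹(K)]`
    (hC : ∀ A : Mat2 (𝓞 K), A.det = η →
      ∑ M ∈ u.support.filter (fun M => ∃ s : SL(2, 𝓞 K), M = A * s.1),
        u M • (Finsupp.single (mAct K (ιm K M) (cInf K)) (1 : R)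
          - Finsupp.single (mAct K (ιm K M) (c0 K)) (1 : R))
      = Finsupp.single (cInf K) (1 : R) - Finsupp.single (c0 K) (1 : R))
    (P : Poly R k) (g : SL(2, 𝓞 K))
    (F : Finset (Mat2 (𝓞 K))) (hF : IsRepSys K (Gamma1 K n) (DeltaEta K n η) F)
    -- a section of `Γ₁(𝔫)\SL₂(𝓞) ≅ E_𝔫`, used to realize Manin symbols `[P,(u,v)]`
    (L : (𝓞 K ⧸ n) × (𝓞 K ⧸ n) → SL(2, 𝓞 K))
    (hL : ∀ p : (𝓞 K ⧸ n) × (𝓞 K ⧸ n), Ideal.span {p.1, p.2} = ⊤ → botPair K n (L p).1 = p) :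
    ∑ δ ∈ F, msym K R k (Gamma1 K n)
        (mAct K (ιm K δ) (mAct K (ιm K g.1) (c0 K)))
        (mAct K (ιm K δ) (mAct K (ιm K g.1) (cInf K)))
        (polyAct K R k δ (polyAct K R k g.1 P))
    = ∑ M ∈ u.support.filter (fun M =>
        Ideal.span {(botPair K n (g.1 * M)).1, (botPair K n (g.1 * M)).2} = ⊤),
        u M • maninSymM K R k (Gamma1 K n) (polyAct K R k M.adjugate P)
          (L (botPair K n (g.1 * M))).1 := by
  set coset := fun δ => u.support.filter fun M =>
    ∃ s : SL(2, 𝓞 K), M = (δ * g.1).adjugate * s.1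
  have hdisj : (F : Set (Mat2 (𝓞 K))).PairwiseDisjoint coset := by
    intro δ₁ h₁ δ₂ h₂ hne
    refine Finset.disjoint_left.mpr fun M hM₁ hM₂ => hne ?_
    obtain ⟨-, s₁, e₁⟩ := Finset.mem_filter.mp hM₁
    obtain ⟨-, s₂, e₂⟩ := Finset.mem_filter.mp hM₂
    exact hF.eq_of_adjugate_mul_eq K n hη h₁ h₂ g s₁ s₂ (e₁.symm.trans e₂)
  have hcover : F.biUnion coset = u.support.filter fun M =>
      Ideal.span {(botPair K n (g.1 * M)).1, (botPair K n (g.1 * M)).2} = ⊤ := by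
    ext M
    simp only [coset, Finset.mem_biUnion, Finset.mem_filter]
    constructor
    · rintro ⟨δ, hδ, hM, s, rfl⟩
      exact ⟨hM, botPair_mul_adjugate_mul K n (hF.1 hδ) g s ▸ span_botPair_eq_top K n s⟩
    · rintro ⟨hM, hspan⟩
      obtain ⟨δ, hδ, s, e⟩ := hF.exists_eq_adjugate_mul K n g _ (hsupp M hM) (hL _ hspan)
      exact ⟨δ, hδ, hM, s, e⟩
  rw [← hcover, Finset.sum_biUnion hdisj]
  exact Finset.sum_congr rfl fun δ hδ =>
    msym_eq_sum_maninSymM K n R k hη u hC L hL (hF.1 hδ) g P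

/-- Hecke action on Manin symbols of level `Γ₁(𝔫)`.
If `∑_M u_M M` is supported on matrices of determinant `η` and satisfies the
condition `(C)`, then for any Manin symbol `[P, (u,v)]` (realized as `[P, g]` for
`g ∈ SL₂(𝓞)` with bottom row `(u,v) mod 𝔫`),
`T_{Δ_η}([P,(u,v)]) = ∑_M u_M [P(aX+bY, cX+dY), (au+cv, bu+dv)]`, the sum over
those `M = (a b; c d)` whose transformed pair `(au+cv, bu+dv)` lies in `E_𝔫`. -/
theorem hecke_action_manin_symbols_Gamma1
    (K : Type) [Field K] [NumberField K] (hK : IsEuclideanImagQuad K)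
    (R : Type) [CommRing R] [Algebra (𝓞 K) R]
    (k : ℕ) (hk : 2 ≤ k)
    (n : Ideal (𝓞 K)) (η : 𝓞 K) (hη : η ≠ 0)
    (hcop : Ideal.span {η} ⊔ n = ⊤)
    (u : Mat2 (𝓞 K) →₀ R)
    (hsupp : ∀ M ∈ u.support, M.det = η)
    -- condition: for every coset `C ∈ M₂(𝓞)_η/SL₂(𝓞)`,
    -- `∑_{M ∈ C} u_M ([M∞] - [M0]) = [∞] - [0]` in `R[P¹(K)]`
    (hC : ∀ A : Mat2 (𝓞 K), A.det = η →
      ∑ M ∈ u.support.filter (fun M => ∃ s : SL(2, 𝓞 K), M = A * s.1),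
        u M • (Finsupp.single (mAct K (ιm K M) (cInf K)) (1 : R)
          - Finsupp.single (mAct K (ιm K M) (c0 K)) (1 : R))
      = Finsupp.single (cInf K) (1 : R) - Finsupp.single (c0 K) (1 : R))
    (P : Poly R k) (g : SL(2, 𝓞 K))
    (F : Finset (Mat2 (𝓞 K))) (hF : IsRepSys K (Gamma1 K n) (DeltaEta K n η) F)
    -- a section of `Γ₁(𝔫)\SL₂(𝓞) ≅ E_𝔫`, used to realize Manin symbols `[P,(u,v)]`
    (L : (𝓞 K ⧸ n) × (𝓞 K ⧸ n) → SL(2, 𝓞 K))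
    (hL : ∀ p : (𝓞 K ⧸ n) × (𝓞 K ⧸ n), Ideal.span {p.1, p.2} = ⊤ → botPair K n (L p).1 = p) :
    ∑ δ ∈ F, msym K R k (Gamma1 K n)
        (mAct K (ιm K δ) (mAct K (ιm K g.1) (c0 K)))
        (mAct K (ιm K δ) (mAct K (ιm K g.1) (cInf K)))
        (polyAct K R k δ (polyAct K R k g.1 P))
    = ∑ M ∈ u.support.filter (fun M =>
        Ideal.span {(botPair K n (g.1 * M)).1, (botPair K n (g.1 * M)).2} = ⊤),
        u M • maninSymM K R k (Gamma1 K n) (polyAct K R k M.adjugate P)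
          (L (botPair K n (g.1 * M))).1 :=
  hecke_action_manin_symbols_Gamma1_general K R k n η hη u hsupp hC P g F hF L hL

end Bianchi
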